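/- arXiv:0805.0154 — 2 statements merged into one kernel-verified Lean document; each statement's English description precedes it below -/
import Mathlib

section
/- Let A be an infinite recursively enumerable subset of {0,1}*, and f : ℕ⁺ → ℕ a total recursive function with f(n) → ∞ such that f(l)2^{-l} is nonincreasing in l for all l ≥ l₀ for some l₀. Then ∑_{s ∈ A} f(K(s)) 2^{-K(s)} diverges to infinity, where K is the prefix-free Kolmogorov complexity. -/
open Filter Topology

namespace Paper

/-- Finite binary strings. -/
abbrev Str := List Bool

/-- A computer: a partial recursive function on binary strings with prefix-free domain. -/
structure Computer where
  f : Str →. Str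
  partrec : Partrec f
  prefixFree : ∀ p q : Str, (f p).Dom → (f q).Dom → p <+: q → p = q

/-- An optimal computer (universal self-delimiting Turing machine). -/
structure OptimalComputer extends Computer where
  optimal : ∀ C : Computer, ∃ sim : ℕ, ∀ p s, s ∈ C.f p →
    ∃ p', s ∈ toComputer.f p' ∧ p'.length ≤ p.length + sim

/-- Prefix-free Kolmogorov complexity (program-size complexity) w.r.t. `U`. -/
noncomputable def Kc (U : OptimalComputer) (s : Str) : ℕ :=
  sInf {n | ∃ p : Str, p.length = n ∧ s ∈ U.f p}

/-- A semi-measure on binary strings: values in [0,1] with all finite partial sums ≤ 1. -/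
def SemiMeasure (r : Str → ℝ) : Prop :=
  (∀ s, 0 ≤ r s ∧ r s ≤ 1) ∧ ∀ F : Finset Str, ∑ s ∈ F, r s ≤ 1

/-- Lower-computability: approximability from below by a total recursive rational function. -/
def LowerComputable (r : Str → ℝ) : Prop :=
  ∃ f : ℕ → Str → ℚ, Computable₂ f ∧
    ∀ s : Str, (∀ n : ℕ, 0 ≤ f n s ∧ (f n s : ℝ) ≤ r s) ∧
      Tendsto (fun n => (f n s : ℝ)) atTop (nhds (r s))

/-- A lower-computable semi-measure. -/
def LCSemiMeasure (r : Str → ℝ) : Prop := SemiMeasure r ∧ LowerComputable r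

/-- A universal probability: a lower-computable semi-measure dominating all
lower-computable semi-measures up to a positive multiplicative constant. -/
def UniversalProb (m : Str → ℝ) : Prop :=
  LCSemiMeasure m ∧ ∀ r : Str → ℝ, LCSemiMeasure r → ∃ c : ℝ, 0 < c ∧ ∀ s, c * r s ≤ m s

/-- The first `n` bits of the base-two expansion of `T mod 1`
(the expansion with infinitely many zeros). -/
noncomputable def binPrefix (T : ℝ) (n : ℕ) : Str :=
  (List.range n).map (fun i => decide (⌊Int.fract T * 2 ^ (i + 1)⌋ % 2 = 1))

/-- A real is right-computable if it is the limit from above of a recursive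
sequence of rationals. -/
def RightComputableReal (T : ℝ) : Prop :=
  ∃ g : ℕ → ℚ, Computable g ∧ (∀ n, T ≤ (g n : ℝ)) ∧
    Tendsto (fun n => (g n : ℝ)) atTop (nhds T)

/-- A real is left-computable if its negation is right-computable. -/
def LeftComputableReal (T : ℝ) : Prop := RightComputableReal (-T)

/-- A computable real number. -/
def ComputableReal (T : ℝ) : Prop :=
  ∃ f : ℕ → ℚ, Computable f ∧ ∀ n : ℕ, |T - (f n : ℝ)| < (2 : ℝ)⁻¹ ^ n

/-- A recursively enumerable set of binary strings. -/
def REset (A : Set Str) : Prop :=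
  ∃ g : Str →. Unit, Partrec g ∧ ∀ s, (g s).Dom ↔ s ∈ A

/-- `T` is weakly Chaitin `D`-random. -/
noncomputable def WeaklyChaitinDRandom (U : OptimalComputer) (D T : ℝ) : Prop :=
  ∃ c : ℕ, ∀ n : ℕ, D * n - c ≤ Kc U (binPrefix T n)

/-- `T` is `D`-compressible. -/
noncomputable def DCompressible (U : OptimalComputer) (D T : ℝ) : Prop :=
  Filter.atTop.limsup (fun n : ℕ => (Kc U (binPrefix T n) : ℝ) / n) ≤ D

/-!
Enumerate `A` computably and injectively. For each `u`, a prefix-free machine sends the inputs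
`1^u 0 q` with `|q| = m(u)` to `2^m(u)` distinct elements of `A`, so by optimality of `U` all of
them have `K ≤ m(u) + u + c`. Choosing `m(u)` computably with `f (m(u) + 2u) ≥ 8^u` and `2^m(u)`
at least twice the number of strings with `K < l₀`, monotonicity of `f l * 2^(-l)` shows that,
once `u ≥ c`, these strings contribute at least `2^m(u) / 2 * 8^u * 2^(-m(u)-2u) = 2^u / 2`.
-/

open Encodable

theorem Partrec.exists_primrec_enum_dom {α σ : Type*} [Primcodable α] [Primcodable σ]
    {g : α →. σ} (hg : Partrec g) :
    ∃ e : ℕ → Option α, Primrec e ∧ ∀ a, (g a).Dom ↔ ∃ k, e k = some a := by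
  obtain ⟨c, hc⟩ := Nat.Partrec.Code.exists_code.1 hg
  refine ⟨fun k => (c.evaln k.unpair.2 k.unpair.1).bind fun _ => decode k.unpair.1, ?_,
    fun a => ?_⟩
  · exact Primrec.option_bind
      (Nat.Partrec.Code.primrec_evaln.comp
        (((Primrec.snd.comp Primrec.unpair).pair (Primrec.const c)).pair
          (Primrec.fst.comp Primrec.unpair)))
      ((Primrec.decode.comp (Primrec.fst.comp Primrec.unpair)).comp Primrec.fst).to₂
  rw [Part.dom_iff_mem]
  constructor
  · rintro ⟨b, hb⟩
    have : encode b ∈ c.eval (encode a) := by simp [hc, encodek, Part.mem_map _ hb]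
    obtain ⟨t, ht⟩ := Nat.Partrec.Code.evaln_complete.1 this
    exact ⟨Nat.pair (encode a) t, by simp [Option.mem_def.1 ht, encodek]⟩
  · rintro ⟨k, hk⟩
    obtain ⟨x, hx, hdec⟩ := Option.bind_eq_some_iff.1 hk
    have := Nat.Partrec.Code.evaln_sound hx
    simp only [hc, hdec, Part.coe_some, Part.bind_some, Part.mem_map_iff] at this
    obtain ⟨b, hb, -⟩ := this
    exact ⟨b, hb⟩

section FirstOccurrences

variable {α : Type*} [DecidableEq α]

def appendNew (l : List α) (a : α) : List α := if a ∈ l then l else l ++ [a]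

theorem prefix_appendNew (l : List α) (a : α) : l <+: appendNew l a := by
  unfold appendNew; split_ifs
  · exact List.prefix_refl l
  · exact List.prefix_append l [a]

theorem nodup_appendNew {l : List α} (hl : l.Nodup) (a : α) : (appendNew l a).Nodup := by
  unfold appendNew; split_ifs with h
  · exact hl
  · exact hl.append (List.nodup_singleton a) (by simpa using h)

theorem mem_appendNew {l : List α} {a b : α} : b ∈ appendNew l a ↔ b ∈ l ∨ b = a := by
  unfold appendNew; split_ifs with h
  · exact ⟨Or.inl, fun hb => hb.elim id (· ▸ h)⟩
  · simp

variable (e : ℕ → Option α)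

def firstOccurrences (n : ℕ) : List α :=
  (List.range n).foldl (fun l k => (e k).elim l (appendNew l)) []

theorem firstOccurrences_succ (n : ℕ) :
    firstOccurrences e (n + 1) =
      (e n).elim (firstOccurrences e n) (appendNew (firstOccurrences e n)) := by
  simp [firstOccurrences, List.range_succ]

theorem firstOccurrences_prefix {n m : ℕ} (h : n ≤ m) :
    firstOccurrences e n <+: firstOccurrences e m := by
  induction m, h using Nat.le_induction with
  | base => exact List.prefix_refl _
  | succ m _ ih =>
    refine ih.trans ?_
    rw [firstOccurrences_succ]
    cases e m
    · exact List.prefix_refl _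
    · exact prefix_appendNew _ _

theorem nodup_firstOccurrences (n : ℕ) : (firstOccurrences e n).Nodup := by
  induction n with
  | zero => simp [firstOccurrences]
  | succ n ih =>
    rw [firstOccurrences_succ]
    cases e n
    · exact ih
    · exact nodup_appendNew ih _

theorem mem_firstOccurrences {n : ℕ} {a : α} :
    a ∈ firstOccurrences e n ↔ ∃ k < n, e k = some a := by
  induction n with
  | zero => simp [firstOccurrences]
  | succ n ih =>
    rw [firstOccurrences_succ, Nat.exists_lt_succ_right, ← ih]
    cases e n <;> simp [mem_appendNew, eq_comm]

variable {e} in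
theorem primrec_firstOccurrences [Primcodable α] (he : Primrec e) :
    Primrec (firstOccurrences e) := by
  have hnew : Primrec₂ (appendNew : List α → α → List α) :=
    Primrec.ite (((PrimrecRel.exists_mem_list (Primrec.eq (α := α))).comp Primrec.fst
      Primrec.snd).of_eq fun p => by simp) Primrec.fst
      (Primrec.list_concat.comp Primrec.fst Primrec.snd)
  have hstep : Primrec₂ fun (l : List α) (k : ℕ) => (e k).elim l (appendNew l) :=
    (Primrec.option_casesOn (he.comp Primrec.snd) Primrec.fst
      (hnew.comp (Primrec.fst.comp Primrec.fst) Primrec.snd).to₂).of_eq fun p => by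
        dsimp only; cases e p.2 <;> rfl
  exact Primrec.list_foldl Primrec.list_range (Primrec.const [])
    (hstep.comp (Primrec.fst.comp Primrec.snd) (Primrec.snd.comp Primrec.snd)).to₂

theorem exists_lt_length_firstOccurrences (h : {a | ∃ k, e k = some a}.Infinite) (i : ℕ) :
    ∃ n, i < (firstOccurrences e n).length := by
  obtain ⟨F, hF, hcard⟩ := h.exists_subset_card_eq (i + 1)
  have : ∀ᶠ n in atTop, ∀ a ∈ F, a ∈ firstOccurrences e n := by
    refine (eventually_all_finset F).2 fun a ha => ?_
    obtain ⟨k, hk⟩ := hF ha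
    exact eventually_atTop.2 ⟨k + 1, fun n hn => (mem_firstOccurrences e).2 ⟨k, hn, hk⟩⟩
  obtain ⟨n, hn⟩ := this.exists
  refine ⟨n, Nat.lt_of_succ_le ?_⟩
  calc i + 1 = F.card := hcard.symm
    _ ≤ (firstOccurrences e n).toFinset.card :=
      Finset.card_le_card fun a ha => by simpa using hn a ha
    _ ≤ _ := List.toFinset_card_le _

end FirstOccurrences

theorem exists_computable_injective_of_primrec_enum {α : Type*} [Primcodable α]
    {e : ℕ → Option α} (he : Primrec e) (h : {a | ∃ k, e k = some a}.Infinite) :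
    ∃ en : ℕ → α, Computable en ∧ Function.Injective en ∧ ∀ i, ∃ k, e k = some (en i) := by
  classical
  obtain ⟨a₀, -⟩ := h.nonempty
  have hlen := exists_lt_length_firstOccurrences e h
  set en : ℕ → α := fun i => (firstOccurrences e (Nat.find (hlen i))).getD i a₀
  -- the stages extend each other, so the `i`-th entry does not depend on the stage
  have getElem?_eq : ∀ {i n}, i < (firstOccurrences e n).length →
      (firstOccurrences e n)[i]? = some (en i) := by
    intro i n hi
    obtain ⟨t, ht⟩ := firstOccurrences_prefix e (Nat.find_min' (hlen i) hi)
    have h0 := Nat.find_spec (hlen i)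
    simp only [en, ← ht, List.getElem?_append_left h0, List.getD_eq_getElem?_getD,
      List.getElem?_eq_getElem h0, Option.getD_some]
  refine ⟨en, ?_, fun i j hij => ?_, fun i => ?_⟩
  · have hfind : Computable fun i => Nat.find (hlen i) :=
      Computable.find (Primrec.nat_lt.comp Primrec.fst
        (Primrec.list_length.comp ((primrec_firstOccurrences he).comp Primrec.snd))).computablePred
        hlen
    exact (Primrec.list_getD a₀).to_comp.comp
      ((primrec_firstOccurrences he).to_comp.comp hfind) Computable.id
  · set n := max (Nat.find (hlen i)) (Nat.find (hlen j))
    have hi := (Nat.find_spec (hlen i)).trans_le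
      (firstOccurrences_prefix e (le_max_left _ _ : _ ≤ n)).length_le
    have hj := (Nat.find_spec (hlen j)).trans_le
      (firstOccurrences_prefix e (le_max_right _ _ : _ ≤ n)).length_le
    exact (List.getElem?_inj hi (nodup_firstOccurrences e n)).1
      ((getElem?_eq hi).trans (hij ▸ (getElem?_eq hj).symm))
  · obtain ⟨k, -, hk⟩ := (mem_firstOccurrences e).1
      (List.mem_of_getElem? (getElem?_eq (Nat.find_spec (hlen i))))
    exact ⟨k, hk⟩

theorem REset.exists_computable_injective {A : Set Str} (hre : REset A) (hA : A.Infinite) :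
    ∃ en : ℕ → Str, Computable en ∧ Function.Injective en ∧ ∀ i, en i ∈ A := by
  obtain ⟨g, hg, hdom⟩ := hre
  obtain ⟨e, he, hedom⟩ := Partrec.exists_primrec_enum_dom hg
  obtain ⟨en, hen, hinj, hrange⟩ := exists_computable_injective_of_primrec_enum he
    (hA.mono fun a ha => (hedom a).1 ((hdom a).2 ha))
  exact ⟨en, hen, hinj, fun i => (hdom _).1 ((hedom _).2 (hrange i))⟩

def Computer.const (s : Str) : Computer where
  f p := ((if p = [] then some s else none : Option Str) : Part Str)
  partrec := Computable.ofOption (Primrec.ite (Primrec.eq.comp Primrec.id (Primrec.const []))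
    (Primrec.const _) (Primrec.const _)).to_comp
  prefixFree p q hp hq _ := by
    simp only [Part.ofOption_dom, Option.isSome_ite] at hp hq
    rw [hp, hq]

/-- Optimality makes the set in the definition of `Kc` nonempty, so its `sInf` is attained
instead of being the junk value `0`. -/
theorem exists_length_eq_Kc (U : OptimalComputer) (s : Str) :
    ∃ p : Str, p.length = Kc U s ∧ s ∈ U.f p := by
  obtain ⟨sim, hsim⟩ := U.optimal (Computer.const s)
  obtain ⟨p, hp, -⟩ := hsim [] s (by simp [Computer.const])
  exact Nat.sInf_mem (s := {n | ∃ p : Str, p.length = n ∧ s ∈ U.f p}) ⟨p.length, p, rfl, hp⟩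

theorem Kc_le_length {U : OptimalComputer} {p s : Str} (h : s ∈ U.f p) : Kc U s ≤ p.length :=
  Nat.sInf_le ⟨p, rfl, h⟩

theorem finite_setOf_Kc_lt (U : OptimalComputer) (l : ℕ) : {s | Kc U s < l}.Finite := by
  refine ((List.finite_length_lt Bool l).biUnion (t := fun p => {s | s ∈ U.f p})
    fun p _ => ?_).subset fun s hs => ?_
  · exact Set.Subsingleton.finite fun _ ha _ hb => Part.mem_unique ha hb
  · obtain ⟨p, hp, hsp⟩ := exists_length_eq_Kc U s
    exact Set.mem_biUnion (show p.length < l from hp ▸ hs) hsp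

section BlockComputer

variable (len : ℕ → ℕ)

/-- Reads `x` as `1^u 0 q` with `u = x.idxOf false`, and accepts it iff `q.length = len u`. -/
def blockPayload (x : Str) : Option Str :=
  if x.length = x.idxOf false + 1 + len (x.idxOf false) then some (x.drop (x.idxOf false + 1))
  else none

theorem blockPayload_replicate_append {u : ℕ} {q : Str} (hq : q.length = len u) :
    blockPayload len (List.replicate u true ++ false :: q) = some q := by
  have hidx : (List.replicate u true ++ false :: q).idxOf false = u := by
    rw [List.idxOf_append_of_notMem (by simp [List.mem_replicate])]
    simp
  simp only [blockPayload, hidx, List.length_append, List.length_replicate, List.length_cons, hq]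
  rw [if_pos (by omega), show List.replicate u true ++ false :: q =
    (List.replicate u true ++ [false]) ++ q by simp, List.drop_left' (by simp)]

theorem eq_of_prefix_of_blockPayload_isSome {x y : Str} (hx : (blockPayload len x).isSome)
    (hy : (blockPayload len y).isSome) (hxy : x <+: y) : x = y := by
  obtain ⟨t, rfl⟩ := hxy
  simp only [blockPayload, Option.isSome_ite] at hx hy
  have hmem : false ∈ x := by
    by_contra h
    rw [← List.idxOf_eq_length_iff] at h
    omega
  rw [List.idxOf_append_of_mem hmem, List.length_append] at hy
  rw [List.eq_nil_of_length_eq_zero (by omega : t.length = 0), List.append_nil]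

theorem computable_blockPayload (hlen : Computable len) : Computable (blockPayload len) := by
  have hidx : Computable fun x : Str => x.idxOf false :=
    (Primrec.list_idxOf.comp (Primrec.const false) Primrec.id).to_comp
  refine (Computable.cond (Primrec.eq.decide.to_comp.comp Computable.list_length
    ((Primrec.nat_add.to_comp.comp (Primrec.succ.to_comp.comp hidx) (hlen.comp hidx))))
    (Computable.option_some.comp (Primrec.list_drop.to_comp.comp
      (Primrec.succ.to_comp.comp hidx) Computable.id)) (Computable.const none)).of_eq fun x => ?_
  simp [blockPayload]

def blockComputer (out : Str → Str) (hlen : Computable len) (hout : Computable out) :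
    Computer where
  f x := ((blockPayload len x).map out : Part Str)
  partrec := Computable.ofOption (Computable.option_map (computable_blockPayload len hlen)
    (hout.comp Computable.snd).to₂)
  prefixFree p q hp hq := eq_of_prefix_of_blockPayload_isSome len
    (by simpa using hp) (by simpa using hq)

theorem mem_blockComputer {out : Str → Str} {hlen : Computable len} {hout : Computable out}
    {u : ℕ} {q : Str} (hq : q.length = len u) :
    out q ∈ (blockComputer len out hlen hout).f (List.replicate u true ++ false :: q) := by
  simp [blockComputer, blockPayload_replicate_append len hq]

end BlockComputer

theorem exists_finset_card_eq_forall_Kc_le (U : OptimalComputer) {en : ℕ → Str}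
    (hen : Computable en) (hinj : Function.Injective en) {len : ℕ → ℕ} (hlen : Computable len) :
    ∃ c : ℕ, ∀ u : ℕ, ∃ F : Finset Str, F.card = 2 ^ len u ∧ (∀ s ∈ F, s ∈ Set.range en) ∧
      ∀ s ∈ F, Kc U s ≤ len u + u + c := by
  obtain ⟨sim, hsim⟩ :=
    U.optimal (blockComputer len (en ∘ encode) hlen (hen.comp Computable.encode))
  refine ⟨sim + 1, fun u => ⟨Finset.univ.image fun v : List.Vector Bool (len u) =>
    en (encode v.toList), ?_, by simp, ?_⟩⟩
  · rw [Finset.card_image_of_injective _ fun v w h =>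
      List.Vector.toList_injective (encode_injective (hinj h)),
      Finset.card_univ, card_vector, Fintype.card_bool]
  · simp only [Finset.mem_image, Finset.mem_univ, true_and, forall_exists_index]
    rintro _ v rfl
    obtain ⟨p, hp, hlenp⟩ := hsim _ _ (mem_blockComputer len (out := en ∘ encode) v.2)
    refine (Kc_le_length hp).trans (hlenp.trans ?_)
    simp only [List.length_append, List.length_replicate, List.length_cons, v.2]
    omega

theorem card_sub_card_filter_mul_le_sum {α : Type*} {g : ℕ → ℝ} {l₀ M : ℕ} (hg0 : ∀ l, 0 ≤ g l)
    (hg : ∀ l l', l₀ ≤ l → l ≤ l' → g l' ≤ g l) {K : α → ℕ} {F : Finset α}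
    (hK : ∀ s ∈ F, K s ≤ M) :
    ((F.card : ℝ) - (F.filter (K · < l₀)).card) * g M ≤ ∑ s ∈ F, g (K s) := by
  have hcard := Finset.card_filter_add_card_filter_not (s := F) (K · < l₀)
  calc ((F.card : ℝ) - (F.filter (K · < l₀)).card) * g M
      = ∑ _s ∈ F.filter (¬ K · < l₀), g M := by
        rw [Finset.sum_const, nsmul_eq_mul, ← hcard]; push_cast; ring
    _ ≤ ∑ s ∈ F.filter (¬ K · < l₀), g (K s) := Finset.sum_le_sum fun s hs => by
        rw [Finset.mem_filter] at hs; exact hg _ _ (not_lt.1 hs.2) (hK s hs.1)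
    _ ≤ ∑ s ∈ F, g (K s) :=
        Finset.sum_le_sum_of_subset_of_nonneg (Finset.filter_subset _ _) fun _ _ _ => hg0 _

theorem two_pow_div_two_le {N m u : ℕ} {y : ℝ} (hN : 2 * N ≤ 2 ^ m) (hy : (8 : ℝ) ^ u ≤ y) :
    (2 : ℝ) ^ u / 2 ≤ ((2 : ℝ) ^ m - N) * (y * 2 ^ (-((m + 2 * u : ℕ) : ℤ))) := by
  have hN' : (2 : ℝ) ^ m / 2 ≤ 2 ^ m - N := by
    have : (2 * N : ℝ) ≤ 2 ^ m := by exact_mod_cast hN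
    linarith
  have h8 : (8 : ℝ) ^ u = 2 ^ u * 4 ^ u := by rw [← mul_pow]; norm_num
  have hM : (2 : ℝ) ^ (-((m + 2 * u : ℕ) : ℤ)) = (2 ^ m * 4 ^ u)⁻¹ := by
    rw [zpow_neg, zpow_natCast, pow_add, pow_mul]; norm_num
  calc (2 : ℝ) ^ u / 2 = (2 ^ m / 2) * (8 ^ u * (2 ^ m * 4 ^ u)⁻¹) := by
        rw [h8]; field_simp
    _ ≤ ((2 : ℝ) ^ m - N) * (y * 2 ^ (-((m + 2 * u : ℕ) : ℤ))) := by
        rw [hM]; gcongr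
        exact (by positivity : (0 : ℝ) ≤ 2 ^ m / 2).trans hN'

theorem exists_computable_payloadLength {f : ℕ → ℕ} (hf : Computable f)
    (hlim : Tendsto f atTop atTop) (N : ℕ) :
    ∃ len : ℕ → ℕ, Computable len ∧ ∀ u, 2 * N ≤ 2 ^ len u ∧ 8 ^ u ≤ f (len u + 2 * u) := by
  have hex : ∀ u, ∃ m, 2 * N ≤ 2 ^ m ∧ 8 ^ u ≤ f (m + 2 * u) := fun u =>
    (((tendsto_pow_atTop_atTop_of_one_lt one_lt_two).eventually_ge_atTop _).and
      ((hlim.comp (tendsto_add_atTop_nat _)).eventually_ge_atTop _)).exists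
  have hpow : Primrec₂ ((· ^ ·) : ℕ → ℕ → ℕ) := Primrec₂.unpaired'.1 Nat.Primrec.pow
  have hdec : Computable fun p : ℕ × ℕ =>
      decide (2 * N ≤ 2 ^ p.2) && decide (8 ^ p.1 ≤ f (p.2 + 2 * p.1)) :=
    (Primrec.and.to_comp.comp
      (Primrec.nat_le.decide.to_comp.comp (Computable.const _)
        (hpow.to_comp.comp (Computable.const 2) Computable.snd))
      (Primrec.nat_le.decide.to_comp.comp (hpow.to_comp.comp (Computable.const 8) Computable.fst)
        (hf.comp (Primrec.nat_add.to_comp.comp Computable.snd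
          (Primrec.nat_mul.to_comp.comp (Computable.const 2) Computable.fst)))))
  exact ⟨_, Computable.find (Computable.computablePred (hdec.of_eq fun p => by simp)) hex,
    fun u => Nat.find_spec (hex u)⟩

/-- For an infinite r.e. set `A` and total recursive `f` with `f n → ∞` such that
`f l * 2^(-l)` is nonincreasing for `l ≥ l₀`, the sum `∑_{s ∈ A} f (K s) 2^(-K s)`
diverges to infinity. -/
theorem sum_fK_two_pow_neg_K_diverges (U : OptimalComputer) (A : Set Str)
    (hA : A.Infinite) (hre : REset A)
    (f : ℕ → ℕ) (hf : Computable f) (hlim : Tendsto f atTop atTop)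
    (l₀ : ℕ) (hmono : ∀ l l' : ℕ, l₀ ≤ l → l ≤ l' →
      (f l' : ℝ) * 2 ^ (-(l' : ℤ)) ≤ (f l : ℝ) * 2 ^ (-(l : ℤ))) :
    ∀ B : ℝ, ∃ F : Finset Str,
      B ≤ ∑ s ∈ F, A.indicator
        (fun s => (f (Kc U s) : ℝ) * 2 ^ (-(Kc U s : ℤ))) s := by
  obtain ⟨en, hen, hinj, henA⟩ := hre.exists_computable_injective hA
  set low := (finite_setOf_Kc_lt U l₀).toFinset
  obtain ⟨len, hlen, hlenspec⟩ := exists_computable_payloadLength hf hlim low.card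
  obtain ⟨c, hc⟩ := exists_finset_card_eq_forall_Kc_le U hen hinj hlen
  intro B
  obtain ⟨u, hBu, hcu⟩ := ((((tendsto_pow_atTop_atTop_of_one_lt one_lt_two).atTop_div_const
    two_pos).eventually_ge_atTop B).and (eventually_ge_atTop c)).exists
  obtain ⟨F, hcard, hFen, hK⟩ := hc u
  have hlowF : (F.filter (Kc U · < l₀)).card ≤ low.card :=
    Finset.card_le_card fun s hs => by simpa [low] using (Finset.mem_filter.1 hs).2
  refine ⟨F, ?_⟩
  calc B ≤ (2 : ℝ) ^ u / 2 := hBu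
    _ ≤ ((2 : ℝ) ^ len u - low.card) *
        ((f (len u + 2 * u) : ℝ) * 2 ^ (-((len u + 2 * u : ℕ) : ℤ))) :=
      two_pow_div_two_le (hlenspec u).1 (by exact_mod_cast (hlenspec u).2)
    _ ≤ ((F.card : ℝ) - (F.filter (Kc U · < l₀)).card) *
        ((f (len u + 2 * u) : ℝ) * 2 ^ (-((len u + 2 * u : ℕ) : ℤ))) := by
      rw [hcard]; push_cast; gcongr
    _ ≤ ∑ s ∈ F, (f (Kc U s) : ℝ) * 2 ^ (-(Kc U s : ℤ)) :=
      card_sub_card_filter_mul_le_sum (fun l => by positivity) hmono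
        fun s hs => (hK s hs).trans (by omega)
    _ = _ := Finset.sum_congr rfl fun s hs => by
      obtain ⟨i, rfl⟩ := hFen s hs
      rw [Set.indicator_of_mem (henA i)]

end Paper
end

section
/- The sum ∑_{s∈{0,1}*} K(s) 2^{-K(s)} diverges to infinity, where K is the prefix-free Kolmogorov complexity. -/
open Filter Topology

namespace Paper

/-! Running a self-delimiting code of `s` (its length in binary, preceded by the length of that
in unary) through the optimal machine gives `K s ≤ |s| + 2 log |s| + c`. As `k ↦ k 2^{-k}` is
antitone for `k ≥ 1` and at most one string has `K s = 0` (the output of the empty program), the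
strings of length `n` contribute at least about `2^n · n 2^{-(n + 2 log n + c)} ≈ 2^{-c}/n`, and
the harmonic series diverges. -/

def natOfBits (l : Str) : ℕ := l.foldr (fun b a => cond b 1 0 + 2 * a) 0

theorem natOfBits_bits (n : ℕ) : natOfBits n.bits = n := by
  have hofDigits : ∀ l : Str, natOfBits l = Nat.ofDigits 2 (l.map fun b => cond b 1 0) := by
    intro l
    induction l with
    | nil => rfl
    | cons b l ih => simp [natOfBits, Nat.ofDigits_cons, ← ih]
  rw [hofDigits, ← Nat.digits_two_eq_bits, Nat.ofDigits_digits]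

theorem primrec_natOfBits : Primrec natOfBits :=
  Primrec.list_foldr Primrec.id (Primrec.const 0) <| Primrec.to₂ <| Primrec.nat_add.comp
    (Primrec.cond (Primrec.fst.comp Primrec.snd) (Primrec.const 1) (Primrec.const 0))
    (Primrec.nat_mul.comp (Primrec.const 2) (Primrec.snd.comp Primrec.snd))

def selfDelimitingCode (s : Str) : Str :=
  List.replicate s.length.size true ++ false :: (s.length.bits ++ s)

/-- The length check makes the domain prefix-free. -/
def decodeSelfDelimiting (p : Str) : Option Str :=
  let k := p.idxOf false
  let rest := p.drop (k + 1)
  if p.length = 2 * k + 1 + natOfBits (rest.take k) then some (rest.drop k) else none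

theorem length_selfDelimitingCode (s : Str) :
    (selfDelimitingCode s).length = s.length + 2 * s.length.size + 1 := by
  simp [selfDelimitingCode, Nat.size_eq_bits_len]
  omega

theorem decodeSelfDelimiting_selfDelimitingCode (s : Str) :
    decodeSelfDelimiting (selfDelimitingCode s) = some s := by
  have hk : (selfDelimitingCode s).idxOf false = s.length.size := by
    simp [selfDelimitingCode, List.idxOf_append]
  have hrest : (selfDelimitingCode s).drop (s.length.size + 1) = s.length.bits ++ s := by
    simp [selfDelimitingCode, List.drop_append]
  have hbits : s.length.bits.length = s.length.size := Nat.size_eq_bits_len _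
  simp only [decodeSelfDelimiting, hk, hrest, length_selfDelimitingCode, List.take_left' hbits,
    List.drop_left' hbits, natOfBits_bits]
  rw [if_pos (by omega)]

theorem eq_of_decodeSelfDelimiting_isSome {p r : Str} (hp : (decodeSelfDelimiting p).isSome)
    (hpr : (decodeSelfDelimiting (p ++ r)).isSome) : r = [] := by
  simp only [decodeSelfDelimiting, Option.isSome_ite] at hp hpr
  have hk : p.idxOf false < p.length := by omega
  have hfalse : false ∈ p := List.idxOf_lt_length_iff.mp hk
  rw [List.idxOf_append_of_mem hfalse, List.drop_append_of_le_length (by omega),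
    List.take_append_of_le_length (by simp; omega), List.length_append] at hpr
  exact List.eq_nil_of_length_eq_zero (by omega)

theorem computable_decodeSelfDelimiting : Computable decodeSelfDelimiting := by
  have hk : Primrec fun p : Str => p.idxOf false :=
    Primrec.list_idxOf.comp (Primrec.const false) Primrec.id
  have hrest : Primrec fun p : Str => p.drop (p.idxOf false + 1) :=
    Primrec.list_drop.comp (Primrec.succ.comp hk) Primrec.id
  have hlen : PrimrecPred fun p : Str => p.length =
      2 * p.idxOf false + 1 + natOfBits ((p.drop (p.idxOf false + 1)).take (p.idxOf false)) :=
    Primrec.eq.comp Primrec.list_length <| Primrec.nat_add.comp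
      (Primrec.nat_add.comp (Primrec.nat_mul.comp (Primrec.const 2) hk) (Primrec.const 1))
      (primrec_natOfBits.comp (Primrec.list_take.comp hk hrest))
  exact (Primrec.ite hlen (Primrec.option_some.comp (Primrec.list_drop.comp hk hrest))
    (Primrec.const none)).to_comp

def selfDelimitingDecoder : Computer where
  f p := decodeSelfDelimiting p
  partrec := computable_decodeSelfDelimiting.ofOption
  prefixFree p q hp hq := by
    rintro ⟨r, rfl⟩
    rw [eq_of_decodeSelfDelimiting_isSome (Part.ofOption_dom _ |>.mp hp)
      (Part.ofOption_dom _ |>.mp hq), List.append_nil]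

theorem Kc_le_of_mem {U : OptimalComputer} {s p : Str} (h : s ∈ U.f p) : Kc U s ≤ p.length :=
  Nat.sInf_le ⟨p, rfl, h⟩

theorem mem_nil_of_Kc_eq_zero {U : OptimalComputer} {s p : Str} (h : s ∈ U.f p)
    (h0 : Kc U s = 0) : s ∈ U.f [] := by
  obtain ⟨q, hq, hs⟩ := Nat.sInf_mem (⟨p.length, p, rfl, h⟩ :
    {n | ∃ p : Str, p.length = n ∧ s ∈ U.f p}.Nonempty)
  rwa [List.eq_nil_of_length_eq_zero (hq.trans h0)] at hs

theorem exists_program_length_le (U : OptimalComputer) :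
    ∃ c : ℕ, ∀ s : Str, ∃ p, s ∈ U.f p ∧ p.length ≤ s.length + 2 * s.length.size + c := by
  obtain ⟨c, hc⟩ := U.optimal selfDelimitingDecoder
  refine ⟨c + 1, fun s => ?_⟩
  obtain ⟨p, hp, hlen⟩ := hc (selfDelimitingCode s) s <| by
    simp [selfDelimitingDecoder, decodeSelfDelimiting_selfDelimitingCode]
  exact ⟨p, hp, by rw [length_selfDelimitingCode] at hlen; omega⟩

def stringsOfLength (n : ℕ) : Finset Str :=
  (Finset.univ : Finset (List.Vector Bool n)).map ⟨List.Vector.toList, List.Vector.toList_injective⟩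

theorem mem_stringsOfLength {n : ℕ} {s : Str} : s ∈ stringsOfLength n ↔ s.length = n :=
  ⟨fun hs => by obtain ⟨v, -, rfl⟩ := Finset.mem_map.mp hs; exact v.toList_length,
    fun hs => Finset.mem_map.mpr ⟨⟨s, hs⟩, Finset.mem_univ _, rfl⟩⟩

theorem card_stringsOfLength (n : ℕ) : (stringsOfLength n).card = 2 ^ n := by
  rw [stringsOfLength, Finset.card_map, Finset.card_univ, card_vector, Fintype.card_bool]

theorem two_pow_size_le {n : ℕ} (hn : 0 < n) : 2 ^ n.size ≤ 2 * n := by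
  obtain ⟨z, hz⟩ := Nat.exists_eq_add_one.mpr (Nat.size_pos.mpr hn)
  rw [hz, pow_succ']
  exact Nat.mul_le_mul_left 2 (Nat.lt_size.mp (by omega))

theorem antitoneOn_div_two_pow : AntitoneOn (fun k : ℕ => (k : ℝ) / 2 ^ k) (Set.Ici 1) := by
  refine antitoneOn_nat_Ici_of_succ_le fun k hk => ?_
  rw [div_le_div_iff₀ (by positivity) (by positivity), pow_succ]
  have : (1 : ℝ) ≤ k := by exact_mod_cast hk
  push_cast
  nlinarith [pow_pos (two_pos : (0 : ℝ) < 2) k]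

theorem card_sub_one_mul_le_sum_div_two_pow {K : Str → ℕ} (hK0 : {s | K s = 0}.Subsingleton)
    {S : Finset Str} {M : ℕ} (hKM : ∀ s ∈ S, K s ≤ M) :
    ((S.card : ℝ) - 1) * (M / 2 ^ M) ≤ ∑ s ∈ S, (K s : ℝ) / 2 ^ K s := by
  classical
  have hcard : S.card ≤ (S.filter fun s => K s ≠ 0).card + 1 := by
    have hzero : (S.filter fun s => ¬K s ≠ 0).card ≤ 1 :=
      Finset.card_le_one.mpr fun s hs t ht =>
        hK0 (of_not_not (Finset.mem_filter.mp hs).2) (of_not_not (Finset.mem_filter.mp ht).2)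
    have := Finset.card_filter_add_card_filter_not (s := S) (p := fun s => K s ≠ 0)
    omega
  set S' := S.filter fun s => K s ≠ 0
  calc ((S.card : ℝ) - 1) * (M / 2 ^ M) ≤ S'.card * (M / 2 ^ M) := by
        gcongr
        linarith [show (S.card : ℝ) ≤ S'.card + 1 by exact_mod_cast hcard]
    _ = ∑ s ∈ S', (M : ℝ) / 2 ^ M := by rw [Finset.sum_const, nsmul_eq_mul]
    _ ≤ ∑ s ∈ S', (K s : ℝ) / 2 ^ K s := Finset.sum_le_sum fun s hs => by
        have hs := Finset.mem_filter.mp hs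
        have hKs : 1 ≤ K s := Nat.one_le_iff_ne_zero.mpr hs.2
        exact antitoneOn_div_two_pow (Set.mem_Ici.mpr hKs)
          (Set.mem_Ici.mpr (hKs.trans (hKM s hs.1))) (hKM s hs.1)
    _ ≤ ∑ s ∈ S, (K s : ℝ) / 2 ^ K s :=
        Finset.sum_le_sum_of_subset_of_nonneg (Finset.filter_subset _ _) fun _ _ _ => by positivity

theorem inv_le_pow_mul_div_two_pow (n c : ℕ) :
    1 / 2 ^ (c + 3) * (1 / (n + 1 : ℝ)) ≤
      2 ^ n * ((n + 1 + 2 * (n + 1).size + c : ℕ) / 2 ^ (n + 1 + 2 * (n + 1).size + c)) := by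
  have hsize := two_pow_size_le n.succ_pos
  have hnat : 2 ^ (n + 1 + 2 * (n + 1).size + c) ≤ 2 ^ (c + 3) * (n + 1) * ((n + 1) * 2 ^ n) :=
    calc 2 ^ (n + 1 + 2 * (n + 1).size + c) = 2 ^ (n + 1) * (2 ^ (n + 1).size) ^ 2 * 2 ^ c := by
          ring
      _ ≤ 2 ^ (n + 1) * (2 * (n + 1)) ^ 2 * 2 ^ c := by gcongr
      _ = 2 ^ (c + 3) * (n + 1) * ((n + 1) * 2 ^ n) := by ring
  have hM : (n + 1 : ℝ) ≤ (n + 1 + 2 * (n + 1).size + c : ℕ) := by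
    exact_mod_cast Nat.le_add_right_of_le (Nat.le_add_right _ _)
  rw [one_div_mul_one_div, mul_div_assoc', div_le_div_iff₀ (by positivity) (by positivity), one_mul]
  calc (2 : ℝ) ^ (n + 1 + 2 * (n + 1).size + c)
      ≤ 2 ^ (c + 3) * (n + 1) * ((n + 1) * 2 ^ n) := by exact_mod_cast hnat
    _ = 2 ^ n * (n + 1) * (2 ^ (c + 3) * (n + 1)) := by ring
    _ ≤ _ := by gcongr

theorem tendsto_sum_div_two_pow_atTop {K : Str → ℕ} {c : ℕ}
    (hK : ∀ s, K s ≤ s.length + 2 * s.length.size + c) (hK0 : {s | K s = 0}.Subsingleton) :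
    Tendsto (fun N => ∑ s ∈ (Finset.range N).biUnion (fun n => stringsOfLength (n + 1)),
      (K s : ℝ) / 2 ^ K s) atTop atTop := by
  have hlength : ∀ n : ℕ, 1 / 2 ^ (c + 3) * (1 / (n + 1)) ≤
      ∑ s ∈ stringsOfLength (n + 1), (K s : ℝ) / 2 ^ K s := fun n => by
    refine (inv_le_pow_mul_div_two_pow n c).trans <| le_trans ?_ <|
      card_sub_one_mul_le_sum_div_two_pow hK0 (M := n + 1 + 2 * (n + 1).size + c)
        fun s hs => (hK s).trans_eq (by rw [mem_stringsOfLength.mp hs])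
    rw [card_stringsOfLength, Nat.cast_pow, Nat.cast_two, pow_succ]
    gcongr
    linarith [one_le_pow₀ (one_le_two : (1 : ℝ) ≤ 2) (n := n)]
  refine tendsto_atTop_mono (fun N => ?_)
    (Real.tendsto_sum_range_one_div_nat_succ_atTop.const_mul_atTop
      (by positivity : (0 : ℝ) < 1 / 2 ^ (c + 3)))
  have hdisjoint : (Finset.range N : Set ℕ).PairwiseDisjoint fun n => stringsOfLength (n + 1) :=
    fun i _ j _ hij => Finset.disjoint_left.mpr fun s hi hj =>
      hij (by rw [mem_stringsOfLength] at hi hj; omega)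
  rw [Finset.sum_biUnion hdisjoint, Finset.mul_sum]
  exact Finset.sum_le_sum fun n _ => hlength n

/-- The sum `∑ s, K s * 2^(-K s)` diverges to infinity. -/
theorem sum_K_two_pow_neg_K_diverges (U : OptimalComputer) :
    ∀ B : ℝ, ∃ F : Finset Str,
      B ≤ ∑ s ∈ F, (Kc U s : ℝ) * 2 ^ (-(Kc U s : ℤ)) := by
  intro B
  obtain ⟨c, hc⟩ := exists_program_length_le U
  have hK : ∀ s, Kc U s ≤ s.length + 2 * s.length.size + c := fun s =>
    let ⟨_, hp, hlen⟩ := hc s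
    (Kc_le_of_mem hp).trans hlen
  have hK0 : {s | Kc U s = 0}.Subsingleton := fun s hs t ht =>
    let ⟨_, hps, _⟩ := hc s
    let ⟨_, hpt, _⟩ := hc t
    Part.mem_unique (mem_nil_of_Kc_eq_zero hps hs) (mem_nil_of_Kc_eq_zero hpt ht)
  obtain ⟨N, hN⟩ := ((tendsto_sum_div_two_pow_atTop hK hK0).eventually_ge_atTop B).exists
  refine ⟨_, hN.trans_eq (Finset.sum_congr rfl fun s _ => ?_)⟩
  rw [zpow_neg, zpow_natCast, div_eq_mul_inv]

end Paper
end
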